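/- Let q be a rational prime and let β ∈ ℂ be an algebraic integer with nonzero imaginary part whose minimal polynomial over ℚ has degree 2, and suppose β · β̄ = q, where β̄ denotes the complex conjugate of β. If β^{12h} is a rational number for some integer h ≥ 1, then β^{12} is a rational integer and β^{12} = q^6 or β^{12} = −q^6. -/

import Mathlib

/-!
With α = β / β̄ = β² / q, rationality of β^(12h) gives α^(12h) = 1, and
α + ᾱ = ((β + β̄)² - 2q) / q is rational because β + β̄ is minus the linear coefficient of the
minimal polynomial of β. A root of unity ζ with ζ + ζ̄ rational has ζ + ζ̄ = m ∈ ℤ with |m| ≤ 2,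
so ζ² - mζ + 1 = 0 forces ζ^12 = 1. Hence β^12 = β̄^12, so β^24 = (ββ̄)^12 = q^12.
-/

open Polynomial ComplexConjugate

theorem minpoly.add_eq_neg_coeff_one_of_natDegree_eq_two {K L : Type*} [Field K] [Field L]
    [Algebra K L] {x y : L} (hdeg : (minpoly K x).natDegree = 2)
    (hy : Polynomial.aeval y (minpoly K x) = 0) (hxy : x ≠ y) :
    x + y = -algebraMap K L ((minpoly K x).coeff 1) := by
  have hx : IsIntegral K x := by
    by_contra h
    simp [minpoly.eq_zero h] at hdeg
  have hquad (z : L) : Polynomial.aeval z (minpoly K x) = z ^ 2 +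
      algebraMap K L ((minpoly K x).coeff 1) * z + algebraMap K L ((minpoly K x).coeff 0) := by
    conv_lhs => rw [eq_quadratic_of_degree_le_two (degree_le_of_natDegree_le hdeg.le)]
    simp [← hdeg, (minpoly.monic hx).leadingCoeff]
  have hfac : (x - y) * (x + y + algebraMap K L ((minpoly K x).coeff 1)) = 0 := by
    linear_combination (hquad x).symm.trans (minpoly.aeval K x) - (hquad y).symm.trans hy
  linear_combination (mul_eq_zero.mp hfac).resolve_left (sub_ne_zero.mpr hxy)

theorem Complex.exists_ratCast_eq_add_conj {z : ℂ} (him : z.im ≠ 0)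
    (hdeg : (minpoly ℚ z).natDegree = 2) : ∃ t : ℚ, z + conj z = t := by
  have hconj : aeval (conj z) (minpoly ℚ z) = 0 := by
    rw [← (starRingEnd ℂ).toRatAlgHom_apply, aeval_algHom_apply, minpoly.aeval, map_zero]
  have hne : z ≠ conj z := fun h => him (Complex.conj_eq_iff_im.mp h.symm)
  refine ⟨-(minpoly ℚ z).coeff 1, ?_⟩
  simpa using minpoly.add_eq_neg_coeff_one_of_natDegree_eq_two hdeg hconj hne

theorem pow_twelve_eq_one_of_sq_sub_mul_add_one_eq_zero {R : Type*} [CommRing R]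
    [NoZeroDivisors R] {ζ : R} {m : ℤ} (hm : |m| ≤ 2) (hζ : ζ ^ 2 - m * ζ + 1 = 0) :
    ζ ^ 12 = 1 := by
  obtain ⟨hm₁, hm₂⟩ := abs_le.mp hm
  interval_cases m
  · have : (ζ + 1) ^ 2 = 0 := by push_cast at hζ; linear_combination hζ
    rw [eq_neg_of_add_eq_zero_left (pow_eq_zero_iff two_ne_zero |>.mp this)]
    norm_num
  · linear_combination (ζ ^ 10 - ζ ^ 9 + ζ ^ 7 - ζ ^ 6 + ζ ^ 4 - ζ ^ 3 + ζ - 1) * hζ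
  · linear_combination (ζ ^ 10 - ζ ^ 8 + ζ ^ 6 - ζ ^ 4 + ζ ^ 2 - 1) * hζ
  · linear_combination (ζ ^ 10 + ζ ^ 9 - ζ ^ 7 - ζ ^ 6 + ζ ^ 4 + ζ ^ 3 - ζ - 1) * hζ
  · have : (ζ - 1) ^ 2 = 0 := by push_cast at hζ; linear_combination hζ
    rw [sub_eq_zero.mp (pow_eq_zero_iff two_ne_zero |>.mp this)]
    norm_num

theorem Complex.pow_twelve_eq_one_of_add_conj_eq_ratCast {ζ : ℂ} {n : ℕ} (hn : n ≠ 0)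
    (hζ : ζ ^ n = 1) {t : ℚ} (ht : ζ + conj ζ = t) : ζ ^ 12 = 1 := by
  have hnorm : ‖ζ‖ = 1 := Complex.norm_eq_one_of_pow_eq_one hζ hn
  have hint : IsIntegral ℤ (ζ + conj ζ) := by
    refine .add (.of_pow (Nat.pos_of_ne_zero hn) ?_) (.of_pow (Nat.pos_of_ne_zero hn) ?_)
    · exact hζ ▸ isIntegral_one
    · rw [← map_pow, hζ, map_one]; exact isIntegral_one
  obtain ⟨m, hm⟩ := (IsIntegral.exists_int_iff_exists_rat hint).mp ⟨t, ht⟩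
  have hm_abs : |m| ≤ 2 := by
    have : ‖ζ + conj ζ‖ ≤ 2 := by
      simpa [hnorm, one_add_one_eq_two] using norm_add_le ζ (conj ζ)
    rw [hm, Complex.norm_intCast] at this
    exact_mod_cast this
  have hmul : ζ * conj ζ = 1 := by
    rw [Complex.mul_conj, Complex.normSq_eq_norm_sq, hnorm]; norm_num
  exact pow_twelve_eq_one_of_sq_sub_mul_add_one_eq_zero hm_abs
    (by linear_combination ζ * hm - hmul)

theorem weil_number_pow_twelve_int_general
    (q : ℕ) (β : ℂ)
    (him : β.im ≠ 0)
    (hdeg : (minpoly ℚ β).natDegree = 2)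
    (hnorm : β * (starRingEnd ℂ) β = (q : ℂ))
    (h : ℕ) (hh : 1 ≤ h)
    (hrat : ∃ r : ℚ, β ^ (12 * h) = (r : ℂ)) :
    (∃ m : ℤ, β ^ 12 = (m : ℂ)) ∧
      (β ^ 12 = (q : ℂ) ^ 6 ∨ β ^ 12 = -(q : ℂ) ^ 6) := by
  obtain ⟨r, hr⟩ := hrat
  obtain ⟨t, ht⟩ := Complex.exists_ratCast_eq_add_conj him hdeg
  have hβ : β ≠ 0 := fun h0 => him (by simp [h0])
  have hβ' : conj β ≠ 0 := by simpa using hβ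
  set α := β / conj β with hα
  have hα_pow : α ^ (12 * h) = 1 := by
    rw [hα, div_pow, ← map_pow, hr, map_ratCast, div_self (hr ▸ pow_ne_zero _ hβ)]
  have hα_add : α + conj α = ((t ^ 2 - 2 * q) / q : ℚ) := by
    rw [hα, map_div₀, Complex.conj_conj]
    push_cast
    rw [← ht, ← hnorm]
    field_simp
    ring
  have h12 : β ^ 12 = conj β ^ 12 := by
    have := Complex.pow_twelve_eq_one_of_add_conj_eq_ratCast (by omega) hα_pow hα_add
    rwa [hα, div_pow, div_eq_one_iff_eq (pow_ne_zero _ hβ')] at this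
  have hsq : (β ^ 12) ^ 2 = ((q : ℂ) ^ 6) ^ 2 := by
    calc (β ^ 12) ^ 2 = (β * conj β) ^ 12 := by rw [sq]; nth_rw 2 [h12]; ring
      _ = ((q : ℂ) ^ 6) ^ 2 := by rw [hnorm]; ring
  rcases sq_eq_sq_iff_eq_or_eq_neg.mp hsq with hpos | hneg
  · exact ⟨⟨q ^ 6, by rw [hpos]; push_cast; ring⟩, .inl hpos⟩
  · exact ⟨⟨-q ^ 6, by rw [hneg]; push_cast; ring⟩, .inr hneg⟩

/-- If β is a quadratic nonreal algebraic integer with β·β̄ = q for a rational prime q,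
and β^(12h) is rational for some h ≥ 1, then β^12 is a rational integer equal to ±q^6. -/
theorem weil_number_pow_twelve_int
    (q : ℕ) (hq : q.Prime) (β : ℂ)
    (hint : IsIntegral ℤ β)
    (him : β.im ≠ 0)
    (hdeg : (minpoly ℚ β).natDegree = 2)
    (hnorm : β * (starRingEnd ℂ) β = (q : ℂ))
    (h : ℕ) (hh : 1 ≤ h)
    (hrat : ∃ r : ℚ, β ^ (12 * h) = (r : ℂ)) :
    (∃ m : ℤ, β ^ 12 = (m : ℂ)) ∧
      (β ^ 12 = (q : ℂ) ^ 6 ∨ β ^ 12 = -(q : ℂ) ^ 6) :=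
  weil_number_pow_twelve_int_general q β him hdeg hnorm h hh hrat
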